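/- Let C be a WSR clause over a CNF formula F upon atomic substitution σ modulo a subformula Δ ⊆ F (with the RUP condition replaced by entailment). Then F entails ∇(σ ≔ ¬C)((F∖Δ) ∪ {C}); in particular if F is satisfiable then (F∖Δ) ∪ {C} is satisfiable. -/
import Mathlib


inductive Atom (V : Type) where
  | tru : Atom V
  | fls : Atom V
  | lit : V → Bool → Atom V
deriving DecidableEq

def Atom.compl {V : Type} : Atom V → Atom V
  | .tru => .fls
  | .fls => .tru
  | .lit v b => .lit v (!b)

/-- A literal: a variable together with a polarity. -/
abbrev Lit (V : Type) := V × Bool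

def Lit.neg {V : Type} (l : Lit V) : Lit V := (l.1, !l.2)

/-- A model is determined by a total assignment to the variables. -/
abbrev Model (V : Type) := V → Bool

def evalAtom {V : Type} (I : Model V) : Atom V → Bool
  | .tru => true
  | .fls => false
  | .lit v b => I v == b

/-- A substitution maps each variable to an atom (extended to atoms/literals below). -/
abbrev Subst (V : Type) := V → Atom V

/-- Atomicity: only finitely many variables are moved. -/
def Subst.IsAtomic {V : Type} (σ : Subst V) : Prop :=
  {v : V | σ v ≠ Atom.lit v true}.Finite

def idSub (V : Type) : Subst V := fun v => Atom.lit v true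

/-- Apply a substitution to a literal, yielding an atom. -/
def subLit {V : Type} (σ : Subst V) (l : Lit V) : Atom V :=
  if l.2 then σ l.1 else (σ l.1).compl

/-- The composed model `I ∘ σ`. -/
def compModel {V : Type} (I : Model V) (σ : Subst V) : Model V :=
  fun v => evalAtom I (σ v)

def satLit {V : Type} (I : Model V) (l : Lit V) : Prop := I l.1 = l.2

/-- A clause: a finite set of literals (disjunctive reading). -/
abbrev Clause (V : Type) := Finset (Lit V)

/-- Non-tautological: no complementary pair of literals. -/
def Clause.Nontaut {V : Type} (C : Clause V) : Prop :=
  ∀ v : V, ¬ ((v, true) ∈ C ∧ (v, false) ∈ C)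

def satClause {V : Type} (I : Model V) (C : Clause V) : Prop :=
  ∃ l ∈ C, satLit I l

/-- `I` falsifies `C`, i.e. satisfies the cube `¬C`. -/
def falsifiesClause {V : Type} (I : Model V) (C : Clause V) : Prop :=
  ∀ l ∈ C, satLit I (Lit.neg l)

/-- A cube is a finite set of literals read conjunctively. -/
def satCube {V : Type} (I : Model V) (Q : Finset (Lit V)) : Prop :=
  ∀ l ∈ Q, satLit I l

/-- `σ` trivializes `C`: some literal is mapped to ⊤, or two literals are mapped
to complementary atoms. -/
def Trivializes {V : Type} (σ : Subst V) (C : Clause V) : Prop :=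
  (∃ l ∈ C, subLit σ l = Atom.tru) ∨
    (∃ l ∈ C, ∃ k ∈ C, subLit σ l = (subLit σ k).compl)

/-- The reduct `C|σ`: images of the literals of `C` that remain literals
(in particular atoms mapped to ⊥ are dropped). -/
def reduct {V : Type} (σ : Subst V) (C : Clause V) : Set (Lit V) :=
  {m | ∃ l ∈ C, subLit σ l = Atom.lit m.1 m.2}

/-- Disjunctive satisfaction of a (possibly infinite) set of literals. -/
def satLitSet {V : Type} (I : Model V) (S : Set (Lit V)) : Prop :=
  ∃ l ∈ S, satLit I l

/-- A CNF formula: a finite set of clauses. -/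
abbrev CNF (V : Type) := Finset (Clause V)

def satCNF {V : Type} (I : Model V) (F : CNF V) : Prop :=
  ∀ C ∈ F, satClause I C

open Classical in
/-- Conditional mutation of a model: apply `σ` if the trigger `T` holds. -/
noncomputable def mutate {V : Type} (I : Model V) (σ : Subst V) (T : Prop) : Model V :=
  if T then compModel I σ else I

/-- A cubic mutation rule `(σ ≔ Q)`. -/
structure MutRule (V : Type) where
  eff : Subst V
  trig : Finset (Lit V)

noncomputable def applyRule {V : Type} (I : Model V) (ε : MutRule V) : Model V :=
  mutate I ε.eff (satCube I ε.trig)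

/-- Apply a sequence of cubic mutation rules `ε₁, …, εₙ` (left to right). -/
noncomputable def applyRules {V : Type} (I : Model V) : List (MutRule V) → Model V
  | [] => I
  | ε :: εs => applyRules (applyRule I ε) εs

/-- SR clause (entailment version of the RUP condition). -/
def IsSR {V : Type} (F : CNF V) (C : Clause V) (σ : Subst V) : Prop :=
  Trivializes σ C ∧
    ∀ D ∈ F, Trivializes σ D ∨
      (∀ I : Model V, falsifiesClause I C → satLitSet I (reduct σ D)) ∨
      (∀ I : Model V, satCNF I F → satClause I C ∨ satLitSet I (reduct σ D))

/-- WSR clause upon `σ` modulo `Δ` (entailment version of the RUP condition). -/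
def IsWSR {V : Type} [DecidableEq V] (F : CNF V) (C : Clause V) (σ : Subst V)
    (Δ : CNF V) : Prop :=
  ∀ D ∈ (F \ Δ) ∪ {C}, Trivializes σ D ∨
    (∀ I : Model V, falsifiesClause I C → satLitSet I (reduct σ D)) ∨
    (∀ I : Model V, satCNF I F → satClause I C ∨ satLitSet I (reduct σ D))

/-- The substitution `Q*` associated with a cube `Q`. -/
def cubeStar {V : Type} [DecidableEq V] (Q : Finset (Lit V)) : Subst V := fun v =>
  if (v, true) ∈ Q then Atom.tru
  else if (v, false) ∈ Q then Atom.fls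
  else Atom.lit v true

/-- Pigeonhole variables: `(i, j)` means "pigeon i is in hole j". -/
def Hcl (i n : ℕ) : Clause (ℕ × ℕ) :=
  (Finset.Ico 1 n).image fun j => ((i, j), true)

def Pcl (i j k : ℕ) : Clause (ℕ × ℕ) :=
  {((i, k), false), ((j, k), false)}

/-- The pigeonhole formula Πₙ. -/
def PHP (n : ℕ) : CNF (ℕ × ℕ) :=
  ((Finset.Icc 1 n).image fun i => Hcl i n) ∪
    ((((Finset.Icc 1 n ×ˢ Finset.Icc 1 n) ×ˢ Finset.Ico 1 n).filter
        fun t => t.1.1 < t.1.2).image fun t => Pcl t.1.1 t.1.2 t.2)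

def Rcl (i n : ℕ) : Clause (ℕ × ℕ) := {((i, n - 1), false)}

/-- The pigeon-swap substitution σᵢₙ, swapping `p i j` with `p n j` for `1 ≤ j < n`. -/
def swapSub (i n : ℕ) : Subst (ℕ × ℕ) := fun p =>
  if p.1 = i ∧ 1 ≤ p.2 ∧ p.2 < n then Atom.lit (n, p.2) true
  else if p.1 = n ∧ 1 ≤ p.2 ∧ p.2 < n then Atom.lit (i, p.2) true
  else Atom.lit p true

lemma evalAtom_compl {V : Type} (I : Model V) (a : Atom V) :
    evalAtom I a.compl = !evalAtom I a := by
  cases a with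
  | tru => rfl
  | fls => rfl
  | lit v b => simp [Atom.compl, evalAtom]; cases I v <;> cases b <;> simp

lemma satLit_comp {V : Type} (I : Model V) (σ : Subst V) (l : Lit V) :
    satLit (compModel I σ) l ↔ evalAtom I (subLit σ l) = true := by
  unfold satLit compModel subLit
  cases hb : l.2 <;> simp [hb, evalAtom_compl]

/-- if `C` is WSR over `F` upon `σ` modulo `Δ ⊆ F`, then
`F ⊨ ∇(σ ≔ ¬C)((F \ Δ) ∪ {C})`; in particular, satisfiability of `F` implies
satisfiability of `(F \ Δ) ∪ {C}`. -/
theorem wsr_entails_mutation {V : Type} [DecidableEq V] (F Δ : CNF V) (C : Clause V)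
    (σ : Subst V) (hσ : Subst.IsAtomic σ) (hΔ : Δ ⊆ F) (hW : IsWSR F C σ Δ) :
    (∀ I : Model V, satCNF I F →
        satCNF (mutate I σ (falsifiesClause I C)) ((F \ Δ) ∪ {C})) ∧
      ((∃ I : Model V, satCNF I F) → ∃ I : Model V, satCNF I ((F \ Δ) ∪ {C})) := by
  have main : ∀ I : Model V, satCNF I F →
      satCNF (mutate I σ (falsifiesClause I C)) ((F \ Δ) ∪ {C}) := by
    intro I hI D hD
    by_cases hf : falsifiesClause I C
    · rw [mutate, if_pos hf]
      rcases hW D hD with htr | hred | hent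
      · rcases htr with ⟨l, hl, hsub⟩ | ⟨l, hl, k, hk, hsub⟩
        · exact ⟨l, hl, (satLit_comp I σ l).2 (by simp [hsub, evalAtom])⟩
        · by_cases hv : evalAtom I (subLit σ k) = true
          · exact ⟨k, hk, (satLit_comp I σ k).2 hv⟩
          · refine ⟨l, hl, (satLit_comp I σ l).2 ?_⟩
            rw [hsub, evalAtom_compl]
            simp at hv; simp [hv]
      · rcases hred I hf with ⟨m, ⟨l, hl, hsub⟩, hm⟩
        refine ⟨l, hl, (satLit_comp I σ l).2 ?_⟩
        simp only [satLit] at hm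
        simp [hsub, evalAtom, hm]
      · rcases hent I hI with hC | ⟨m, ⟨l, hl, hsub⟩, hm⟩
        · rcases hC with ⟨l, hl, hsat⟩
          have h2 := hf l hl
          simp only [satLit, Lit.neg] at hsat h2
          rw [hsat] at h2
          simp at h2
        · refine ⟨l, hl, (satLit_comp I σ l).2 ?_⟩
          simp only [satLit] at hm
          simp [hsub, evalAtom, hm]
    · rw [mutate, if_neg hf]
      rcases Finset.mem_union.1 hD with hD | hD
      · exact hI D (Finset.mem_sdiff.1 hD).1
      · rw [Finset.mem_singleton] at hD; subst hD
        simp only [falsifiesClause, not_forall] at hf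
        rcases hf with ⟨l, hl, hns⟩
        refine ⟨l, hl, ?_⟩
        simp [satLit, Lit.neg] at hns ⊢
        cases hb : l.2 <;> simp [hb] at hns ⊢ <;> simpa using hns
  refine ⟨main, fun ⟨I, hI⟩ => ⟨_, main I hI⟩⟩
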